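/- Let R_m = sup{ |{t ∈ [0,∞) : |Λ_m f(t)| ≥ 1}| / ∫₀^∞ |f(t)| dt : f ∈ F^sp_m }. Then liminf_{m→∞} R_m ≥ sup{ (x + y) / ( 2e^x − x − 4 − y + 2(2 − e^x)(e^y + 1) − 2·ln(2(2 − e^x)) ) }, where the supremum on the right-hand side is taken over all real x ∈ [ln(3/2), ln 2) and all real y satisfying e^{−y} ≤ 2(2 − e^x) ≤ 3 e^{−y}. -/

import Mathlib

open MeasureTheory Real Set

/-- The operator `Λ_m`. -/
noncomputable def Lam (m : ℕ) (f : ℝ → ℝ) (t : ℝ) : ℝ :=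
  ((1 + (m : ℝ)) / t ^ (1 + (m : ℝ) / 2)) * (∫ s in (0:ℝ)..t, f s * s ^ ((m : ℝ) / 2)) - f t

/-- The coefficient `D(b,m) = (2(1+m)/m)(2 b^{-m/2} - 1)`. -/
noncomputable def Dcoef (m : ℕ) (b : ℝ) : ℝ :=
  (2 * (1 + (m : ℝ)) / (m : ℝ)) * (2 * b ^ (-(m : ℝ) / 2) - 1)

/-- The parameter set `S_m`. -/
def Sset (m : ℕ) : Set (ℝ × ℝ) :=
  {p : ℝ × ℝ | 1 < p.1 ∧ p.1 < p.2 ∧ 0 < Dcoef m p.1 ∧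
    -(2 + (m : ℝ)) / (m : ℝ) + Dcoef m p.1 * p.1 ^ ((m : ℝ) / 2) < 0 ∧
    0 < -(2 + (m : ℝ)) / (m : ℝ) + Dcoef m p.1 * p.2 ^ ((m : ℝ) / 2) ∧
    -(2 + (m : ℝ)) / (m : ℝ) + Dcoef m p.1 * p.2 ^ ((m : ℝ) / 2) < 2}

/-- The function `f_{b,d,m}` from the class `F^sp_m`. -/
noncomputable def fsp (m : ℕ) (b d t : ℝ) : ℝ :=
  if 1 < t ∧ t ≤ b then (2 + (m : ℝ)) / (m : ℝ) - (2 * (1 + (m : ℝ)) / (m : ℝ)) * t ^ ((m : ℝ) / 2)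
  else if b < t ∧ t ≤ d then -(2 + (m : ℝ)) / (m : ℝ) + Dcoef m b * t ^ ((m : ℝ) / 2)
  else 0

/-- `t₀(b,m)`. -/
noncomputable def t0 (m : ℕ) (b : ℝ) : ℝ :=
  ((2 + (m : ℝ)) / (2 * (1 + (m : ℝ)))) ^ (2 / (m : ℝ)) *
    (2 * b ^ (-(m : ℝ) / 2) - 1) ^ (-(2 / (m : ℝ)))

/-- The denominator of `W(b,d,m)`. -/
noncomputable def denom (m : ℕ) (b d : ℝ) : ℝ :=
  (m : ℝ) / (2 + (m : ℝ)) - ((2 + (m : ℝ)) / (m : ℝ)) * d - (2 * (m : ℝ) / (2 + (m : ℝ))) * b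
    + (4 * (1 + (m : ℝ)) / ((m : ℝ) * (2 + (m : ℝ)))) * (2 * b ^ (-(m : ℝ) / 2) - 1)
      * d ^ (1 + (m : ℝ) / 2)
    + 2 * t0 m b

/-- `W(b,d,m)`. -/
noncomputable def Wf (m : ℕ) (b d : ℝ) : ℝ := (d - 1) / denom m b d

/-- The weak-type ratio of `f_{b,d,m}` under `Λ_m`. -/
noncomputable def ratio (m : ℕ) (b d : ℝ) : ℝ :=
  (MeasureTheory.volume {t : ℝ | 0 ≤ t ∧ 1 ≤ |Lam m (fsp m b d) t|}).toReal /
    ∫ t in Set.Ici (0 : ℝ), |fsp m b d t|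

/-- The restricted weak-type constant of `Λ_m` over the class `F^sp_m`. -/
noncomputable def Rsp (m : ℕ) : ℝ :=
  sSup {r : ℝ | ∃ b d : ℝ, (b, d) ∈ Sset m ∧ r = ratio m b d}

/-!
For `(b, d) ∈ S_m` the function `f = f_{b,d,m}` is built so that `Λ_m f = 1` on `(1, b]`,
`Λ_m f = -1` on `(b, d]`, and `|Λ_m f| < 1` elsewhere on `[0, ∞)`; hence the level set is
`(1, d]` and the ratio is `W(b, d, m) = (d - 1) / ∫ |f|`, the integral being computed in closed
form by splitting `(1, d]` at `b` and at the zero `t₀(b, m)` of `f`.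
Taking `b = e^{2x/m}` and `d = e^{2θ/m}` with `θ → x + y`, both `(m/2)(d - 1)` and
`(m/2) ∫ |f|` converge, and the ratio tends to the expression in `(x, y)`.
Since `sSup` and `liminf` of unbounded real families are junk values, one also needs
`R_m ≤ 100` for `m ≥ 10`, which follows from elementary lower bounds for `∫ |f|` on the three
pieces.
-/

open Filter Topology

lemma intervalIntegral.integral_congr_Ioc {f g : ℝ → ℝ} {u v : ℝ} (huv : u ≤ v)
    (h : EqOn f g (Ioc u v)) : ∫ x in u..v, f x = ∫ x in u..v, g x :=
  intervalIntegral.integral_congr_ae (ae_of_all _ fun _ hx => h (by rwa [uIoc_of_le huv] at hx))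

lemma IntervalIntegrable.congr_Ioc {f g : ℝ → ℝ} {u v : ℝ} (huv : u ≤ v)
    (hf : IntervalIntegrable f volume u v) (h : EqOn f g (Ioc u v)) :
    IntervalIntegrable g volume u v :=
  (intervalIntegrable_congr (by rwa [uIoc_of_le huv])).mp hf

lemma integral_const_add_mul_rpow (c e r u v : ℝ) (hr : 0 ≤ r) :
    ∫ t in u..v, (c + e * t ^ r) = c * (v - u) + e * ((v ^ (r + 1) - u ^ (r + 1)) / (r + 1)) := by
  rw [intervalIntegral.integral_add (f := fun _ => c) (g := fun t => e * t ^ r)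
      intervalIntegrable_const
      ((continuous_const.mul (continuous_rpow_const hr)).intervalIntegrable _ _),
    intervalIntegral.integral_const, intervalIntegral.integral_const_mul,
    integral_rpow (Or.inl (by linarith)), smul_eq_mul]
  ring

lemma integral_mul_rpow_add_mul_rpow (c e r₁ r₂ u v : ℝ) (h₁ : 0 ≤ r₁) (h₂ : 0 ≤ r₂) :
    ∫ t in u..v, (c * t ^ r₁ + e * t ^ r₂)
      = c * ((v ^ (r₁ + 1) - u ^ (r₁ + 1)) / (r₁ + 1))
        + e * ((v ^ (r₂ + 1) - u ^ (r₂ + 1)) / (r₂ + 1)) := by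
  rw [intervalIntegral.integral_add (f := fun t => c * t ^ r₁) (g := fun t => e * t ^ r₂)
      ((continuous_const.mul (continuous_rpow_const h₁)).intervalIntegrable _ _)
      ((continuous_const.mul (continuous_rpow_const h₂)).intervalIntegrable _ _),
    intervalIntegral.integral_const_mul, intervalIntegral.integral_const_mul,
    integral_rpow (Or.inl (by linarith)), integral_rpow (Or.inl (by linarith))]

structure Admissible (m : ℕ) (b d : ℝ) : Prop where
  pos : 0 < m
  one_lt : 1 < b
  lt : b < d
  coef_pos : 0 < Dcoef m b
  neg_at_b : -(2 + (m : ℝ)) / (m : ℝ) + Dcoef m b * b ^ ((m : ℝ) / 2) < 0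
  pos_at_d : 0 < -(2 + (m : ℝ)) / (m : ℝ) + Dcoef m b * d ^ ((m : ℝ) / 2)
  lt_two_at_d : -(2 + (m : ℝ)) / (m : ℝ) + Dcoef m b * d ^ ((m : ℝ) / 2) < 2

lemma Admissible.of_mem {m : ℕ} {b d : ℝ} (hm : 0 < m) (hS : (b, d) ∈ Sset m) :
    Admissible m b d :=
  let ⟨h₁, h₂, h₃, h₄, h₅, h₆⟩ := hS
  ⟨hm, h₁, h₂, h₃, h₄, h₅, h₆⟩

namespace Admissible

variable {m : ℕ} {b d : ℝ} (h : Admissible m b d)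
include h

lemma cast_pos : (0 : ℝ) < m := Nat.cast_pos.mpr h.pos
lemma b_pos : 0 < b := one_pos.trans h.one_lt
lemma one_lt_d : 1 < d := h.one_lt.trans h.lt
lemma d_pos : 0 < d := one_pos.trans h.one_lt_d

lemma two_mul_rpow_neg_sub_one_pos : 0 < 2 * b ^ (-(m : ℝ) / 2) - 1 := by
  have hc : 0 < 2 * (1 + (m : ℝ)) / m := by have := h.cast_pos; positivity
  exact (pos_iff_pos_of_mul_pos h.coef_pos).mp hc

lemma t0_pos : 0 < t0 m b := by
  have := h.cast_pos
  exact mul_pos (rpow_pos_of_pos (by positivity) _)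
    (rpow_pos_of_pos h.two_mul_rpow_neg_sub_one_pos _)

lemma coef_mul_t0_rpow_half : Dcoef m b * t0 m b ^ ((m : ℝ) / 2) = (2 + (m : ℝ)) / m := by
  have hm := h.cast_pos
  have hZ := h.two_mul_rpow_neg_sub_one_pos
  have hc : (0 : ℝ) ≤ (2 + (m : ℝ)) / (2 * (1 + (m : ℝ))) := by positivity
  rw [t0, mul_rpow (rpow_nonneg hc _) (rpow_nonneg hZ.le _), ← rpow_mul hc, ← rpow_mul hZ.le,
    show 2 / (m : ℝ) * ((m : ℝ) / 2) = 1 by field_simp,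
    show -(2 / (m : ℝ)) * ((m : ℝ) / 2) = -1 by field_simp, rpow_one, rpow_neg_one, Dcoef]
  generalize 2 * b ^ (-(m : ℝ) / 2) - 1 = Z at hZ ⊢
  field_simp

lemma b_lt_t0 : b < t0 m b := by
  have hlt : Dcoef m b * b ^ ((m : ℝ) / 2) < Dcoef m b * t0 m b ^ ((m : ℝ) / 2) := by
    rw [h.coef_mul_t0_rpow_half]; linarith [h.neg_at_b, neg_div (m : ℝ) (2 + m)]
  exact (rpow_lt_rpow_iff h.b_pos.le h.t0_pos.le (by have := h.cast_pos; positivity)).mp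
    (lt_of_mul_lt_mul_left hlt h.coef_pos.le)

lemma t0_lt_d : t0 m b < d := by
  have hlt : Dcoef m b * t0 m b ^ ((m : ℝ) / 2) < Dcoef m b * d ^ ((m : ℝ) / 2) := by
    rw [h.coef_mul_t0_rpow_half]; linarith [h.pos_at_d, neg_div (m : ℝ) (2 + m)]
  exact (rpow_lt_rpow_iff h.t0_pos.le h.d_pos.le (by have := h.cast_pos; positivity)).mp
    (lt_of_mul_lt_mul_left hlt h.coef_pos.le)

lemma rpow_half_lt_two : b ^ ((m : ℝ) / 2) < 2 := by
  have hZ := h.two_mul_rpow_neg_sub_one_pos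
  have hB := rpow_pos_of_pos h.b_pos ((m : ℝ) / 2)
  rw [show -(m : ℝ) / 2 = -((m : ℝ) / 2) by ring, rpow_neg h.b_pos.le] at hZ
  have := mul_pos hZ hB
  rwa [sub_mul, mul_assoc, inv_mul_cancel₀ hB.ne', one_mul, mul_one, sub_pos] at this

end Admissible

section Pieces

variable {m : ℕ} {b d t : ℝ}

lemma fsp_of_le_one (hb : 1 ≤ b) (ht : t ≤ 1) : fsp m b d t = 0 := by
  rw [fsp, if_neg (by rintro ⟨h₁, -⟩; linarith), if_neg (by rintro ⟨h₁, -⟩; linarith)]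

lemma fsp_of_mem_Ioc_one_b (ht : t ∈ Ioc 1 b) :
    fsp m b d t = (2 + (m : ℝ)) / m - 2 * (1 + (m : ℝ)) / m * t ^ ((m : ℝ) / 2) := by
  rw [fsp, if_pos (show 1 < t ∧ t ≤ b from ht)]

lemma fsp_of_mem_Ioc_b_d (ht : t ∈ Ioc b d) :
    fsp m b d t = -(2 + (m : ℝ)) / m + Dcoef m b * t ^ ((m : ℝ) / 2) := by
  rw [fsp, if_neg (by rintro ⟨-, h₂⟩; linarith [ht.1]), if_pos (show b < t ∧ t ≤ d from ht)]

lemma fsp_of_d_lt (hbd : b ≤ d) (ht : d < t) : fsp m b d t = 0 := by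
  rw [fsp, if_neg (by rintro ⟨-, h₂⟩; linarith), if_neg (by rintro ⟨-, h₂⟩; linarith)]

lemma fsp_mul_rpow_of_mem_Ioc_one_b (ht : t ∈ Ioc 1 b) :
    fsp m b d t * t ^ ((m : ℝ) / 2) = (2 + (m : ℝ)) / m * t ^ ((m : ℝ) / 2)
      + -(2 * (1 + (m : ℝ)) / m) * t ^ ((m : ℝ) / 2 + (m : ℝ) / 2) := by
  rw [fsp_of_mem_Ioc_one_b ht, rpow_add (one_pos.trans ht.1)]
  ring

lemma fsp_mul_rpow_of_mem_Ioc_b_d (hb : 1 ≤ b) (ht : t ∈ Ioc b d) :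
    fsp m b d t * t ^ ((m : ℝ) / 2) = -(2 + (m : ℝ)) / m * t ^ ((m : ℝ) / 2)
      + Dcoef m b * t ^ ((m : ℝ) / 2 + (m : ℝ) / 2) := by
  rw [fsp_of_mem_Ioc_b_d ht, rpow_add (by linarith [ht.1])]
  ring

lemma intervalIntegrable_fsp (hb : 1 ≤ b) (hbd : b ≤ d) (u v : ℝ) :
    IntervalIntegrable (fsp m b d) volume u v := by
  have hr : (0 : ℝ) ≤ (m : ℝ) / 2 := by positivity
  set w := |u| + |v| + d
  have hw : -w ≤ 1 ∧ d ≤ w := by constructor <;> linarith [abs_nonneg u, abs_nonneg v]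
  have h₁ : IntervalIntegrable (fsp m b d) volume (-w) 1 :=
    intervalIntegrable_const.congr_Ioc hw.1 fun s hs => (fsp_of_le_one hb hs.2).symm
  have h₂ : IntervalIntegrable (fsp m b d) volume 1 b :=
    ((continuous_const.sub (continuous_const.mul (continuous_rpow_const hr))).intervalIntegrable
      _ _).congr_Ioc hb fun s hs => (fsp_of_mem_Ioc_one_b hs).symm
  have h₃ : IntervalIntegrable (fsp m b d) volume b d :=
    ((continuous_const.add (continuous_const.mul (continuous_rpow_const hr))).intervalIntegrable
      _ _).congr_Ioc hbd fun s hs => (fsp_of_mem_Ioc_b_d hs).symm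
  have h₄ : IntervalIntegrable (fsp m b d) volume d w :=
    intervalIntegrable_const.congr_Ioc hw.2 fun s hs => (fsp_of_d_lt hbd hs.1).symm
  refine (((h₁.trans h₂).trans h₃).trans h₄).mono_set (uIcc_subset_uIcc ?_ ?_) <;>
    rw [mem_uIcc] <;> left <;> constructor <;>
    linarith [neg_abs_le u, le_abs_self u, neg_abs_le v, le_abs_self v, abs_nonneg u,
      abs_nonneg v, hw.2]

end Pieces

noncomputable def fspMoment (m : ℕ) (b d t : ℝ) : ℝ :=
  ∫ s in (0 : ℝ)..t, fsp m b d s * s ^ ((m : ℝ) / 2)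

lemma Lam_fsp (m : ℕ) (b d t : ℝ) :
    Lam m (fsp m b d) t = (1 + (m : ℝ)) / t ^ (1 + (m : ℝ) / 2) * fspMoment m b d t - fsp m b d t :=
  rfl

section LevelSet

variable {m : ℕ} {b d t : ℝ}

lemma fspMoment_of_le_one (hb : 1 ≤ b) (ht₀ : 0 ≤ t) (ht : t ≤ 1) : fspMoment m b d t = 0 := by
  rw [fspMoment, intervalIntegral.integral_congr_Ioc ht₀ (g := fun _ => 0) fun s hs => by
    rw [fsp_of_le_one hb (hs.2.trans ht), zero_mul]]
  simp

variable (h : Admissible m b d)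
include h

lemma fspMoment_add (u v : ℝ) :
    fspMoment m b d u + ∫ s in u..v, fsp m b d s * s ^ ((m : ℝ) / 2) = fspMoment m b d v := by
  have hr : Continuous fun s : ℝ => s ^ ((m : ℝ) / 2) := continuous_rpow_const (by positivity)
  exact intervalIntegral.integral_add_adjacent_intervals
    ((intervalIntegrable_fsp h.one_lt.le h.lt.le _ _).mul_continuousOn hr.continuousOn)
    ((intervalIntegrable_fsp h.one_lt.le h.lt.le _ _).mul_continuousOn hr.continuousOn)

lemma fspMoment_of_mem_Icc_one_b (ht : t ∈ Icc 1 b) :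
    fspMoment m b d t = 2 / m * (1 - t ^ ((m : ℝ) / 2)) * t ^ (1 + (m : ℝ) / 2) := by
  have hm := h.cast_pos
  have ht₀ : 0 < t := one_pos.trans_le ht.1
  rw [← fspMoment_add h 1 t, fspMoment_of_le_one h.one_lt.le zero_le_one le_rfl,
    intervalIntegral.integral_congr_Ioc ht.1 fun s hs =>
      fsp_mul_rpow_of_mem_Ioc_one_b ⟨hs.1, hs.2.trans ht.2⟩,
    integral_mul_rpow_add_mul_rpow _ _ _ _ _ _ (by positivity) (by positivity),
    one_rpow, one_rpow,
    show (m : ℝ) / 2 + (m : ℝ) / 2 + 1 = (m : ℝ) / 2 + (1 + (m : ℝ) / 2) by ring,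
    rpow_add ht₀ _ (1 + (m : ℝ) / 2), add_comm ((m : ℝ) / 2) 1]
  field_simp
  ring

lemma fspMoment_of_mem_Icc_b_d (ht : t ∈ Icc b d) :
    fspMoment m b d t
      = (-(2 / m) + Dcoef m b / (m + 1) * t ^ ((m : ℝ) / 2)) * t ^ (1 + (m : ℝ) / 2) := by
  have hm := h.cast_pos
  have hb₀ := h.b_pos
  have ht₀ : 0 < t := hb₀.trans_le ht.1
  rw [← fspMoment_add h b t, fspMoment_of_mem_Icc_one_b h ⟨h.one_lt.le, le_rfl⟩,
    intervalIntegral.integral_congr_Ioc ht.1 fun s hs =>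
      fsp_mul_rpow_of_mem_Ioc_b_d h.one_lt.le ⟨hs.1, hs.2.trans ht.2⟩,
    integral_mul_rpow_add_mul_rpow _ _ _ _ _ _ (by positivity) (by positivity),
    show (m : ℝ) / 2 + (m : ℝ) / 2 + 1 = (m : ℝ) / 2 + (1 + (m : ℝ) / 2) by ring,
    rpow_add ht₀ _ (1 + (m : ℝ) / 2), rpow_add hb₀ _ (1 + (m : ℝ) / 2),
    add_comm ((m : ℝ) / 2) 1, Dcoef, show -(m : ℝ) / 2 = -((m : ℝ) / 2) by ring,
    rpow_neg hb₀.le]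
  have hB := (rpow_pos_of_pos hb₀ ((m : ℝ) / 2)).ne'
  field_simp
  ring

lemma fspMoment_of_d_le (ht : d ≤ t) : fspMoment m b d t = fspMoment m b d d := by
  rw [← fspMoment_add h d t, intervalIntegral.integral_congr_Ioc ht (g := fun _ => 0) fun s hs => by
    rw [fsp_of_d_lt h.lt.le hs.1, zero_mul]]
  simp

lemma Lam_fsp_of_mem_Icc_zero_one (ht : t ∈ Icc 0 1) : Lam m (fsp m b d) t = 0 := by
  rw [Lam_fsp, fspMoment_of_le_one h.one_lt.le ht.1 ht.2, fsp_of_le_one h.one_lt.le ht.2]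
  simp

lemma Lam_fsp_of_mem_Ioc_one_b (ht : t ∈ Ioc 1 b) : Lam m (fsp m b d) t = 1 := by
  have hm := h.cast_pos
  have ht₀ : 0 < t := one_pos.trans ht.1
  have hV := (rpow_pos_of_pos ht₀ (1 + (m : ℝ) / 2)).ne'
  rw [Lam_fsp, fspMoment_of_mem_Icc_one_b h (Ioc_subset_Icc_self ht), fsp_of_mem_Ioc_one_b ht]
  field_simp
  ring

lemma Lam_fsp_of_mem_Ioc_b_d (ht : t ∈ Ioc b d) : Lam m (fsp m b d) t = -1 := by
  have hm := h.cast_pos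
  have ht₀ : 0 < t := h.b_pos.trans ht.1
  have hV := (rpow_pos_of_pos ht₀ (1 + (m : ℝ) / 2)).ne'
  rw [Lam_fsp, fspMoment_of_mem_Icc_b_d h (Ioc_subset_Icc_self ht), fsp_of_mem_Ioc_b_d ht]
  field_simp
  ring

/-- Beyond `d`, `Λ_m f(t) = (g(d) - 1)(d / t)^{1 + m/2}`, where `g(d) ∈ (0, 2)` is the value of
the second piece of `f` at `d`. -/
lemma abs_Lam_fsp_lt_one_of_d_lt (ht : d < t) : |Lam m (fsp m b d) t| < 1 := by
  have hm := h.cast_pos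
  have hd₀ := h.d_pos
  have ht₀ : 0 < t := hd₀.trans ht
  have hVt := rpow_pos_of_pos ht₀ (1 + (m : ℝ) / 2)
  have hVd := rpow_pos_of_pos hd₀ (1 + (m : ℝ) / 2)
  have hgd : (1 + (m : ℝ)) * (-(2 / m) + Dcoef m b / (m + 1) * d ^ ((m : ℝ) / 2))
      = (-(2 + (m : ℝ)) / m + Dcoef m b * d ^ ((m : ℝ) / 2)) - 1 := by
    field_simp
    ring
  have hq : d ^ (1 + (m : ℝ) / 2) / t ^ (1 + (m : ℝ) / 2) < 1 :=
    (div_lt_one hVt).mpr (rpow_lt_rpow hd₀.le ht (by positivity))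
  rw [Lam_fsp, fspMoment_of_d_le h ht.le, fspMoment_of_mem_Icc_b_d h ⟨h.lt.le, le_rfl⟩,
    fsp_of_d_lt h.lt.le ht, sub_zero,
    show ∀ x y z w : ℝ, x / y * (z * w) = (x * z) * (w / y) by intros; ring, hgd, abs_mul,
    abs_of_pos (div_pos hVd hVt)]
  have : |-(2 + (m : ℝ)) / m + Dcoef m b * d ^ ((m : ℝ) / 2) - 1| < 1 := by
    rw [abs_lt]; constructor <;> linarith [h.pos_at_d, h.lt_two_at_d]
  calc _ < 1 * 1 := mul_lt_mul'' this hq (abs_nonneg _) (div_pos hVd hVt).le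
    _ = 1 := one_mul 1

lemma levelSet_Lam_fsp : {t : ℝ | 0 ≤ t ∧ 1 ≤ |Lam m (fsp m b d) t|} = Ioc 1 d := by
  ext t
  constructor
  · rintro ⟨ht₀, ht⟩
    rcases le_or_gt t 1 with ht₁ | ht₁
    · rw [Lam_fsp_of_mem_Icc_zero_one h ⟨ht₀, ht₁⟩] at ht
      norm_num at ht
    · exact ⟨ht₁, not_lt.mp fun htd => (abs_Lam_fsp_lt_one_of_d_lt h htd).not_ge ht⟩
  · intro ht
    refine ⟨by linarith [ht.1], ?_⟩
    rcases le_or_gt t b with htb | htb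
    · rw [Lam_fsp_of_mem_Ioc_one_b h ⟨ht.1, htb⟩]; norm_num
    · rw [Lam_fsp_of_mem_Ioc_b_d h ⟨htb, ht.2⟩]; norm_num

lemma volume_levelSet_Lam_fsp :
    (volume {t : ℝ | 0 ≤ t ∧ 1 ≤ |Lam m (fsp m b d) t|}).toReal = d - 1 := by
  rw [levelSet_Lam_fsp h, Real.volume_Ioc, ENNReal.toReal_ofReal (by linarith [h.one_lt_d])]

end LevelSet

section L1Norm

variable {m : ℕ} {b d t : ℝ} (h : Admissible m b d)
include h

lemma abs_fsp_of_mem_Ioc_one_b (ht : t ∈ Ioc 1 b) :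
    |fsp m b d t| = -((2 + (m : ℝ)) / m) + 2 * (1 + (m : ℝ)) / m * t ^ ((m : ℝ) / 2) := by
  have hm := h.cast_pos
  have h₁ : (1 : ℝ) ≤ t ^ ((m : ℝ) / 2) := one_le_rpow ht.1.le (by positivity)
  have h₂ : (2 + (m : ℝ)) / m ≤ 2 * (1 + (m : ℝ)) / m := by gcongr; linarith
  have h₃ := mul_le_mul_of_nonneg_left h₁ (by positivity : (0 : ℝ) ≤ 2 * (1 + (m : ℝ)) / m)
  rw [fsp_of_mem_Ioc_one_b ht, abs_of_nonpos (by linarith)]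
  ring

lemma abs_fsp_of_mem_Ioc_b_t0 (ht : t ∈ Ioc b (t0 m b)) :
    |fsp m b d t| = (2 + (m : ℝ)) / m + -Dcoef m b * t ^ ((m : ℝ) / 2) := by
  have hm := h.cast_pos
  have h₁ := mul_le_mul_of_nonneg_left
    (rpow_le_rpow (h.b_pos.trans ht.1).le ht.2 (by positivity : (0 : ℝ) ≤ (m : ℝ) / 2))
    h.coef_pos.le
  rw [h.coef_mul_t0_rpow_half] at h₁
  rw [fsp_of_mem_Ioc_b_d ⟨ht.1, ht.2.trans h.t0_lt_d.le⟩, abs_of_nonpos (by rw [neg_div]; linarith)]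
  ring

lemma abs_fsp_of_mem_Ioc_t0_d (ht : t ∈ Ioc (t0 m b) d) :
    |fsp m b d t| = -((2 + (m : ℝ)) / m) + Dcoef m b * t ^ ((m : ℝ) / 2) := by
  have hm := h.cast_pos
  have h₁ := mul_le_mul_of_nonneg_left
    (rpow_le_rpow h.t0_pos.le ht.1.le (by positivity : (0 : ℝ) ≤ (m : ℝ) / 2)) h.coef_pos.le
  rw [h.coef_mul_t0_rpow_half] at h₁
  rw [fsp_of_mem_Ioc_b_d ⟨h.b_lt_t0.trans ht.1, ht.2⟩, abs_of_nonneg (by rw [neg_div]; linarith),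
    neg_div]

lemma intervalIntegrable_abs_fsp (u v : ℝ) :
    IntervalIntegrable (fun t => |fsp m b d t|) volume u v :=
  (intervalIntegrable_fsp h.one_lt.le h.lt.le u v).abs

lemma integral_abs_fsp_one_b :
    ∫ t in (1 : ℝ)..b, |fsp m b d t| = -((2 + (m : ℝ)) / m) * (b - 1)
      + 2 * (1 + (m : ℝ)) / m * ((b ^ ((m : ℝ) / 2 + 1) - 1) / ((m : ℝ) / 2 + 1)) := by
  rw [intervalIntegral.integral_congr_Ioc h.one_lt.le fun t ht => abs_fsp_of_mem_Ioc_one_b h ht,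
    integral_const_add_mul_rpow _ _ _ _ _ (by positivity), one_rpow]

lemma integral_abs_fsp_b_t0 :
    ∫ t in b..t0 m b, |fsp m b d t| = (2 + (m : ℝ)) / m * (t0 m b - b)
      + -Dcoef m b
        * ((t0 m b ^ ((m : ℝ) / 2 + 1) - b ^ ((m : ℝ) / 2 + 1)) / ((m : ℝ) / 2 + 1)) := by
  rw [intervalIntegral.integral_congr_Ioc h.b_lt_t0.le fun t ht => abs_fsp_of_mem_Ioc_b_t0 h ht,
    integral_const_add_mul_rpow _ _ _ _ _ (by positivity)]

lemma integral_abs_fsp_t0_d :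
    ∫ t in t0 m b..d, |fsp m b d t| = -((2 + (m : ℝ)) / m) * (d - t0 m b)
      + Dcoef m b * ((d ^ ((m : ℝ) / 2 + 1) - t0 m b ^ ((m : ℝ) / 2 + 1)) / ((m : ℝ) / 2 + 1)) := by
  rw [intervalIntegral.integral_congr_Ioc h.t0_lt_d.le fun t ht => abs_fsp_of_mem_Ioc_t0_d h ht,
    integral_const_add_mul_rpow _ _ _ _ _ (by positivity)]

lemma integral_abs_fsp_eq_add :
    ∫ t in Ici (0 : ℝ), |fsp m b d t| = (∫ t in (1 : ℝ)..b, |fsp m b d t|)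
      + (∫ t in b..t0 m b, |fsp m b d t|) + ∫ t in t0 m b..d, |fsp m b d t| := by
  have hsupp : ∫ t in Ici (0 : ℝ), |fsp m b d t| = ∫ t in Ioc (1 : ℝ) d, |fsp m b d t| := by
    refine setIntegral_eq_of_subset_of_forall_sdiff_eq_zero measurableSet_Ici
      (fun t ht => zero_le_one.trans ht.1.le) fun t ⟨_, ht⟩ => ?_
    rcases le_or_gt t 1 with ht₁ | ht₁
    · rw [fsp_of_le_one h.one_lt.le ht₁, abs_zero]
    · rw [fsp_of_d_lt h.lt.le (not_le.mp fun htd => ht ⟨ht₁, htd⟩), abs_zero]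
  rw [hsupp, ← intervalIntegral.integral_of_le h.one_lt_d.le,
    intervalIntegral.integral_add_adjacent_intervals (intervalIntegrable_abs_fsp h _ _)
      (intervalIntegrable_abs_fsp h _ _),
    intervalIntegral.integral_add_adjacent_intervals (intervalIntegrable_abs_fsp h _ _)
      (intervalIntegrable_abs_fsp h _ _)]

lemma integral_abs_fsp : ∫ t in Ici (0 : ℝ), |fsp m b d t| = denom m b d := by
  have hm := h.cast_pos
  have hb₀ := h.b_pos
  have hT₀ := h.t0_pos
  have hd₀ := h.d_pos
  rw [integral_abs_fsp_eq_add h, integral_abs_fsp_one_b h, integral_abs_fsp_b_t0 h,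
    integral_abs_fsp_t0_d h, denom, Dcoef, rpow_add_one hb₀.ne', rpow_add_one hT₀.ne',
    rpow_add_one hd₀.ne', add_comm 1 ((m : ℝ) / 2), rpow_add_one hd₀.ne',
    show t0 m b ^ ((m : ℝ) / 2) = (2 + (m : ℝ)) / m / Dcoef m b by
      rw [← h.coef_mul_t0_rpow_half, mul_div_cancel_left₀ _ h.coef_pos.ne'], Dcoef,
    show -(m : ℝ) / 2 = -((m : ℝ) / 2) by ring, rpow_neg hb₀.le]
  have h2B : 2 - b ^ ((m : ℝ) / 2) ≠ 0 := (sub_pos.mpr h.rpow_half_lt_two).ne'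
  have hB := (rpow_pos_of_pos hb₀ ((m : ℝ) / 2)).ne'
  generalize b ^ ((m : ℝ) / 2) = B at h2B hB ⊢
  field_simp
  ring

lemma ratio_eq_Wf : ratio m b d = Wf m b d := by
  rw [ratio, volume_levelSet_Lam_fsp h, integral_abs_fsp h, Wf]

end L1Norm

section UniformBound

variable {m : ℕ} {b d : ℝ} (h : Admissible m b d)
include h

lemma Admissible.b_le_two (hm : 2 ≤ m) : b ≤ 2 := by
  have hp : (1 : ℝ) ≤ (m : ℝ) / 2 := by
    rw [le_div_iff₀ two_pos]; exact_mod_cast (by omega : 1 * 2 ≤ m)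
  exact (self_le_rpow_of_one_le h.one_lt.le hp).trans h.rpow_half_lt_two.le

lemma Admissible.lt_rpow_half : (3 * (m : ℝ) + 2) / (2 * m + 2) < b ^ ((m : ℝ) / 2) := by
  have hm := h.cast_pos
  have hB := (rpow_pos_of_pos h.b_pos ((m : ℝ) / 2)).ne'
  have hDB : Dcoef m b * b ^ ((m : ℝ) / 2) = 2 * (1 + (m : ℝ)) / m * (2 - b ^ ((m : ℝ) / 2)) := by
    rw [Dcoef, show -(m : ℝ) / 2 = -((m : ℝ) / 2) by ring, rpow_neg h.b_pos.le]
    field_simp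
  have hlt := h.neg_at_b
  rw [hDB, neg_div, ← sub_eq_neg_add, sub_neg, ← sub_pos,
    show (2 + (m : ℝ)) / m - 2 * (1 + (m : ℝ)) / m * (2 - b ^ ((m : ℝ) / 2))
      = (2 * m + 2) / m * (b ^ ((m : ℝ) / 2) - (3 * m + 2) / (2 * m + 2)) by field_simp; ring]
    at hlt
  exact sub_pos.mp (pos_of_mul_pos_right hlt (by positivity))

/-- `b^{m/2}` is bounded away from `1`, so `b - 1 ≥ log b = (2/m) log b^{m/2}` is of order
`1/m`. -/
lemma Admissible.two_div_le_sub_one : 2 / (3 * (m : ℝ) + 2) ≤ b - 1 := by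
  have hm := h.cast_pos
  have hB := rpow_pos_of_pos h.b_pos ((m : ℝ) / 2)
  have hlog : 1 - (b ^ ((m : ℝ) / 2))⁻¹ ≤ (m : ℝ) / 2 * (b - 1) := by
    have h₁ := log_le_sub_one_of_pos (inv_pos.mpr hB)
    rw [log_inv, log_rpow h.b_pos] at h₁
    nlinarith [log_le_sub_one_of_pos h.b_pos]
  have hinv : (b ^ ((m : ℝ) / 2))⁻¹ < (2 * m + 2) / (3 * m + 2) := by
    rw [inv_lt_comm₀ hB (by positivity), inv_div]
    exact h.lt_rpow_half
  rw [div_le_iff₀ (by positivity)]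
  rw [lt_div_iff₀ (by positivity)] at hinv
  nlinarith

lemma Admissible.d_le_three_mul_t0 (hm : 2 ≤ m) : d ≤ 3 * t0 m b := by
  have hm₀ := h.cast_pos
  have hp : (1 : ℝ) ≤ (m : ℝ) / 2 := by
    rw [le_div_iff₀ two_pos]; exact_mod_cast (by omega : 1 * 2 ≤ m)
  by_contra! hd
  have h₁ : (3 : ℝ) ≤ 3 ^ ((m : ℝ) / 2) := self_le_rpow_of_one_le (by norm_num) hp
  have h₂ := mul_le_mul_of_nonneg_left
    (rpow_le_rpow (by linarith [h.t0_pos]) hd.le (by positivity : (0 : ℝ) ≤ (m : ℝ) / 2))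
    h.coef_pos.le
  rw [mul_rpow (by norm_num) h.t0_pos.le, mul_left_comm, h.coef_mul_t0_rpow_half] at h₂
  have h₃ : 3 * ((2 + (m : ℝ)) / m) ≤ 3 ^ ((m : ℝ) / 2) * ((2 + (m : ℝ)) / m) :=
    mul_le_mul_of_nonneg_right h₁ (by positivity)
  have h₄ : (1 : ℝ) ≤ (2 + (m : ℝ)) / m := by rw [le_div_iff₀ hm₀]; linarith
  linarith [h.lt_two_at_d, neg_div (m : ℝ) (2 + m)]

lemma sub_one_le_integral_abs_fsp_one_b : b - 1 ≤ ∫ t in (1 : ℝ)..b, |fsp m b d t| := by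
  have hm := h.cast_pos
  have hle : ∫ _ in (1 : ℝ)..b, (1 : ℝ) ≤ ∫ t in (1 : ℝ)..b, |fsp m b d t| := by
    refine intervalIntegral.integral_mono_on_of_le_Ioo h.one_lt.le intervalIntegrable_const
      (intervalIntegrable_abs_fsp h _ _) fun t ht => ?_
    rw [abs_fsp_of_mem_Ioc_one_b h (Ioo_subset_Ioc_self ht)]
    have h₁ : (1 : ℝ) ≤ t ^ ((m : ℝ) / 2) := one_le_rpow ht.1.le (by positivity)
    have h₂ := mul_le_mul_of_nonneg_left h₁ (by positivity : (0 : ℝ) ≤ 2 * (1 + (m : ℝ)) / m)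
    have h₃ : 2 * (1 + (m : ℝ)) / m - (2 + (m : ℝ)) / m = 1 := by field_simp; ring
    linarith
  rwa [intervalIntegral.integral_const, smul_eq_mul, mul_one] at hle

lemma integral_abs_fsp_b_t0_ge :
    (2 + (m : ℝ)) * (t0 m b - b) - 2 * t0 m b ≤ m * ∫ t in b..t0 m b, |fsp m b d t| := by
  have hm := h.cast_pos
  have hb := h.b_pos
  have hbpow : 0 ≤ Dcoef m b * (b ^ ((m : ℝ) / 2) * b) / ((m : ℝ) / 2 + 1) := by
    have := h.coef_pos; positivity
  rw [integral_abs_fsp_b_t0 h, rpow_add_one h.t0_pos.ne', rpow_add_one hb.ne',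
    show -Dcoef m b * ((t0 m b ^ ((m : ℝ) / 2) * t0 m b - b ^ ((m : ℝ) / 2) * b)
      / ((m : ℝ) / 2 + 1)) = -(Dcoef m b * t0 m b ^ ((m : ℝ) / 2) * t0 m b / ((m : ℝ) / 2 + 1))
        + Dcoef m b * (b ^ ((m : ℝ) / 2) * b) / ((m : ℝ) / 2 + 1) by ring,
    h.coef_mul_t0_rpow_half,
    show (2 + (m : ℝ)) / m * t0 m b / ((m : ℝ) / 2 + 1) = 2 * t0 m b / m by field_simp; ring,
    mul_add, mul_add, mul_neg, ← mul_assoc, mul_div_cancel₀ _ hm.ne', mul_div_cancel₀ _ hm.ne']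
  nlinarith

/-- On `(t₀, d]`, convexity of `t ↦ t^{m/2}` gives `|f(t)| ≥ (2 + m)(t - t₀) / (2 t₀)`. -/
lemma integral_abs_fsp_t0_d_ge (hm : 2 ≤ m) :
    (2 + (m : ℝ)) / (4 * t0 m b) * (d - t0 m b) ^ 2 ≤ ∫ t in t0 m b..d, |fsp m b d t| := by
  have hm₀ := h.cast_pos
  have hT := h.t0_pos
  have hp : (1 : ℝ) ≤ (m : ℝ) / 2 := by
    rw [le_div_iff₀ two_pos]; exact_mod_cast (by omega : 1 * 2 ≤ m)
  set c := (2 + (m : ℝ)) / (2 * t0 m b)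
  have hle : ∫ t in t0 m b..d, c * (t - t0 m b) ≤ ∫ t in t0 m b..d, |fsp m b d t| := by
    refine intervalIntegral.integral_mono_on_of_le_Ioo h.t0_lt_d.le
      ((by fun_prop : Continuous fun t => c * (t - t0 m b)).intervalIntegrable _ _)
      (intervalIntegrable_abs_fsp h _ _) fun t ht => ?_
    rw [abs_fsp_of_mem_Ioc_t0_d h (Ioo_subset_Ioc_self ht)]
    have ht₀ : 0 < t := hT.trans ht.1
    have hber := one_add_mul_self_le_rpow_one_add
      (by have := div_nonneg (sub_nonneg.mpr ht.1.le) hT.le; linarith :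
        (-1 : ℝ) ≤ (t - t0 m b) / t0 m b) hp
    rw [show 1 + (t - t0 m b) / t0 m b = t / t0 m b by field_simp; ring,
      div_rpow ht₀.le hT.le, le_div_iff₀ (rpow_pos_of_pos hT _)] at hber
    have := mul_le_mul_of_nonneg_left hber h.coef_pos.le
    rw [show Dcoef m b * ((1 + (m : ℝ) / 2 * ((t - t0 m b) / t0 m b)) * t0 m b ^ ((m : ℝ) / 2))
      = Dcoef m b * t0 m b ^ ((m : ℝ) / 2) * (1 + (m : ℝ) / 2 * ((t - t0 m b) / t0 m b)) by ring,
      h.coef_mul_t0_rpow_half] at this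
    have hc : (2 + (m : ℝ)) / m * (1 + (m : ℝ) / 2 * ((t - t0 m b) / t0 m b))
        = (2 + (m : ℝ)) / m + c * (t - t0 m b) := by simp only [c]; field_simp
    linarith
  rw [intervalIntegral.integral_const_mul, intervalIntegral.integral_comp_sub_right
    (fun x => x), sub_self, integral_id] at hle
  convert hle using 1
  simp only [c]
  field_simp
  ring

lemma t0_sub_b_le (hT : t0 m b ≤ 4) :
    t0 m b - b ≤ 26 * (b - 1) + 2 * ∫ t in b..t0 m b, |fsp m b d t| := by
  have hm := h.cast_pos
  have hJ := integral_abs_fsp_b_t0_ge h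
  have hJ₀ : 0 ≤ ∫ t in b..t0 m b, |fsp m b d t| :=
    intervalIntegral.integral_nonneg h.b_lt_t0.le fun _ _ => abs_nonneg _
  have hb := h.two_div_le_sub_one
  rw [div_le_iff₀ (by positivity)] at hb
  have htb := sub_pos.mpr h.b_lt_t0
  rcases le_or_gt (4 * t0 m b) ((2 + m) * (t0 m b - b)) with hc | hc
  · suffices (m : ℝ) * (t0 m b - b) ≤ m * (2 * ∫ t in b..t0 m b, |fsp m b d t|) by
      linarith [le_of_mul_le_mul_left this hm, h.one_lt]
    nlinarith
  · nlinarith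

lemma d_sub_t0_le (hm : 8 ≤ m) (hT : t0 m b ≤ 4) :
    d - t0 m b ≤ 26 * (b - 1) + ∫ t in t0 m b..d, |fsp m b d t| := by
  have hm₀ := h.cast_pos
  have hm₈ : (8 : ℝ) ≤ m := by exact_mod_cast hm
  have hJ := integral_abs_fsp_t0_d_ge h (by omega)
  have hb := h.two_div_le_sub_one
  rw [div_le_iff₀ (by positivity)] at hb
  have hdt := sub_pos.mpr h.t0_lt_d
  have hc : (m : ℝ) / 16 * (d - t0 m b) ^ 2 ≤ (2 + (m : ℝ)) / (4 * t0 m b) * (d - t0 m b) ^ 2 := by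
    refine mul_le_mul_of_nonneg_right ?_ (sq_nonneg _)
    rw [div_le_div_iff₀ (by norm_num) (by linarith [h.t0_pos])]
    nlinarith
  rcases le_or_gt ((m : ℝ) * (d - t0 m b)) 16 with hc' | hc'
  · have hJ₀ : 0 ≤ ∫ t in t0 m b..d, |fsp m b d t| :=
      intervalIntegral.integral_nonneg h.t0_lt_d.le fun t _ => abs_nonneg _
    nlinarith
  · nlinarith

/-- If `t₀ > 4`, the piece `(b, t₀]` alone carries a fixed fraction of `d - 1 ≤ 3 t₀`; otherwise
all three pieces have length `O(1/m)` and are compared with `b - 1 ≥ 2 / (3m + 2)`. -/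
lemma d_sub_one_le_hundred_mul_denom (hm : 10 ≤ m) : d - 1 ≤ 100 * denom m b d := by
  have hm₀ := h.cast_pos
  have hm₁₀ : (10 : ℝ) ≤ m := by exact_mod_cast hm
  have hJ₁ := sub_one_le_integral_abs_fsp_one_b h
  have hJ₂ : 0 ≤ ∫ t in b..t0 m b, |fsp m b d t| :=
    intervalIntegral.integral_nonneg h.b_lt_t0.le fun t _ => abs_nonneg _
  have hJ₃ : 0 ≤ ∫ t in t0 m b..d, |fsp m b d t| :=
    intervalIntegral.integral_nonneg h.t0_lt_d.le fun t _ => abs_nonneg _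
  rw [← integral_abs_fsp h, integral_abs_fsp_eq_add h]
  rcases le_or_gt (t0 m b) 4 with hT | hT
  · linarith [t0_sub_b_le h hT, d_sub_t0_le h (by omega) hT, h.one_lt]
  · have hJ := integral_abs_fsp_b_t0_ge h
    have hb : (2 + (m : ℝ)) * b ≤ 12 / 5 * m := by nlinarith [h.b_le_two (by omega)]
    have hJ' : t0 m b - 12 / 5 ≤ ∫ t in b..t0 m b, |fsp m b d t| :=
      le_of_mul_le_mul_left (by linarith) hm₀
    linarith [h.d_le_three_mul_t0 (by omega), h.one_lt]

end UniformBound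

section RspBound

variable {m : ℕ} {b d : ℝ}

lemma ratio_nonneg (m : ℕ) (b d : ℝ) : 0 ≤ ratio m b d :=
  div_nonneg ENNReal.toReal_nonneg (integral_nonneg fun _ => abs_nonneg _)

lemma ratio_le_hundred (hm : 10 ≤ m) (hS : (b, d) ∈ Sset m) : ratio m b d ≤ 100 := by
  have h := Admissible.of_mem (by omega) hS
  have hd := d_sub_one_le_hundred_mul_denom h hm
  have hden : 0 < denom m b d := by linarith [h.one_lt_d]
  rw [ratio_eq_Wf h, Wf, div_le_iff₀ hden]
  linarith

lemma bddAbove_ratio (hm : 10 ≤ m) :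
    BddAbove {r : ℝ | ∃ b d : ℝ, (b, d) ∈ Sset m ∧ r = ratio m b d} :=
  ⟨100, by rintro r ⟨b, d, hS, rfl⟩; exact ratio_le_hundred hm hS⟩

lemma ratio_le_Rsp (hm : 10 ≤ m) (hS : (b, d) ∈ Sset m) : ratio m b d ≤ Rsp m :=
  le_csSup (bddAbove_ratio hm) ⟨b, d, hS, rfl⟩

lemma Rsp_nonneg (m : ℕ) : 0 ≤ Rsp m :=
  Real.sSup_nonneg <| by rintro r ⟨b, d, -, rfl⟩; exact ratio_nonneg m b d

lemma Rsp_le_hundred (hm : 10 ≤ m) : Rsp m ≤ 100 :=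
  Real.sSup_le (by rintro r ⟨b, d, hS, rfl⟩; exact ratio_le_hundred hm hS) (by norm_num)

lemma isCoboundedUnder_ge_Rsp : IsCoboundedUnder (· ≥ ·) atTop Rsp :=
  isBoundedUnder_of_eventually_le
    ((eventually_ge_atTop 10).mono fun _ hm => Rsp_le_hundred hm) |>.isCoboundedUnder_ge

end RspBound

section Limit

/-- `(n/2)(e^{2θ/n} - 1) = θ · dslope exp 0 (2θ/n)`, and `dslope exp 0` is continuous at `0`
with value `exp' 0 = 1`. -/
lemma tendsto_half_mul_exp_sub_one {θ : ℕ → ℝ} {θ₀ : ℝ} (hθ : Tendsto θ atTop (𝓝 θ₀)) :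
    Tendsto (fun n : ℕ => (n : ℝ) / 2 * (exp (2 * θ n / n) - 1)) atTop (𝓝 θ₀) := by
  have hu : Tendsto (fun n : ℕ => 2 * θ n / n) atTop (𝓝 0) := by
    simpa [div_eq_mul_inv] using (hθ.const_mul 2).mul
      (tendsto_inv_atTop_zero.comp tendsto_natCast_atTop_atTop)
  have hs := (continuousAt_dslope_same.mpr (differentiableAt_exp (x := 0))).tendsto.comp hu
  rw [dslope_same, Real.deriv_exp, exp_zero] at hs
  refine (mul_one θ₀ ▸ hθ.mul hs).congr' ?_
  filter_upwards [eventually_ne_atTop 0] with n hn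
  have hn' : (n : ℝ) ≠ 0 := Nat.cast_ne_zero.mpr hn
  by_cases h₀ : θ n = 0
  · simp [h₀]
  · rw [Function.comp_apply, dslope_of_ne _ (by positivity), slope_def_field, exp_zero]
    field_simp
    ring

variable {x y : ℝ} {n : ℕ}

lemma exp_two_mul_div_rpow_half (x : ℝ) (hn : n ≠ 0) :
    exp (2 * x / n) ^ ((n : ℝ) / 2) = exp x := by
  rw [← exp_mul]
  field_simp

lemma exp_two_mul_div_rpow_neg_half (x : ℝ) (hn : n ≠ 0) :
    exp (2 * x / n) ^ (-(n : ℝ) / 2) = exp (-x) := by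
  rw [← exp_mul]
  field_simp

lemma two_mul_exp_neg_sub_one_mul_exp (x : ℝ) : (2 * exp (-x) - 1) * exp x = 2 - exp x := by
  rw [sub_mul, mul_assoc, ← exp_add, neg_add_cancel, exp_zero, mul_one, one_mul]

lemma Dcoef_exp (hn : n ≠ 0) :
    Dcoef n (exp (2 * x / n)) = 2 * (1 + (n : ℝ)) / n * (2 * exp (-x) - 1) := by
  rw [Dcoef, exp_two_mul_div_rpow_neg_half x hn]

lemma mem_Sset_exp {A : ℝ} (hn : n ≠ 0) (hx : 3 / 2 ≤ exp x) (hx' : exp x < 2)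
    (hA : 2 + (n : ℝ) < (1 + n) * A) (hA' : (1 + n) * A < 3 * n + 2) :
    (exp (2 * x / n), exp (2 * (x + log A - log (2 * (2 - exp x))) / n)) ∈ Sset n := by
  have hn₀ : (0 : ℝ) < n := Nat.cast_pos.mpr (Nat.pos_of_ne_zero hn)
  have ha : 0 < 2 * (2 - exp x) := by linarith
  have hA₁ : 1 < A := by nlinarith
  have hx₀ : 0 < x := by
    rw [← exp_lt_exp, exp_zero]; linarith
  have hZ := two_mul_exp_neg_sub_one_mul_exp x
  have hDb : Dcoef n (exp (2 * x / n)) * exp (2 * x / n) ^ ((n : ℝ) / 2)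
      = 2 * (1 + (n : ℝ)) * (2 - exp x) / n := by
    rw [Dcoef_exp hn, exp_two_mul_div_rpow_half x hn, mul_assoc, hZ]
    ring
  have hDd : Dcoef n (exp (2 * x / n))
      * exp (2 * (x + log A - log (2 * (2 - exp x))) / n) ^ ((n : ℝ) / 2) = (1 + n) * A / n := by
    rw [Dcoef_exp hn, exp_two_mul_div_rpow_half _ hn, exp_sub, exp_add, exp_log (by linarith),
      exp_log ha, mul_assoc, show (2 * exp (-x) - 1) * (exp x * A / (2 * (2 - exp x)))
        = (2 * exp (-x) - 1) * exp x * A / (2 * (2 - exp x)) by ring, hZ]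
    have : 2 - exp x ≠ 0 := by linarith
    field_simp
  refine ⟨?_, ?_, ?_, ?_, ?_, ?_⟩
  · exact one_lt_exp_iff.mpr (by positivity)
  · have : log (2 * (2 - exp x)) ≤ 0 := log_nonpos ha.le (by linarith)
    exact exp_lt_exp.mpr (div_lt_div_of_pos_right (by linarith [log_pos hA₁]) hn₀)
  · rw [Dcoef_exp hn]
    have : 0 < 2 * exp (-x) - 1 := by nlinarith [exp_pos x]
    positivity
  · rw [hDb, neg_div, neg_add_lt_iff_lt_add, add_zero]
    exact div_lt_div_of_pos_right (by nlinarith) hn₀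
  · rw [hDd, neg_div, lt_neg_add_iff_add_lt, add_zero]
    exact div_lt_div_of_pos_right hA hn₀
  · rw [hDd, neg_div, neg_add_lt_iff_lt_add, show (2 + (n : ℝ)) / n + 2 = (3 * n + 2) / n by
      field_simp; ring]
    exact div_lt_div_of_pos_right hA' hn₀

lemma t0_exp (hn : n ≠ 0) (hx' : exp x < 2) :
    t0 n (exp (2 * x / n))
      = exp (2 * (log ((2 + n) / (1 + n)) + x - log (2 * (2 - exp x))) / n) := by
  have hn₀ : (0 : ℝ) < n := Nat.cast_pos.mpr (Nat.pos_of_ne_zero hn)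
  have hZ : 2 * exp (-x) - 1 = 2 * (2 - exp x) / 2 * exp (-x) := by
    rw [exp_neg]
    field_simp
  have hlogZ : log (2 * exp (-x) - 1) = log (2 * (2 - exp x)) - log 2 - x := by
    rw [hZ, log_mul (by linarith [exp_pos x]) (exp_ne_zero _),
      log_div (by linarith) two_ne_zero, log_exp]
    ring
  have hlogC : log ((2 + (n : ℝ)) / (2 * (1 + n))) = log ((2 + n) / (1 + n)) - log 2 := by
    rw [← log_div (by positivity) two_ne_zero, div_div, mul_comm]
  rw [t0, exp_two_mul_div_rpow_neg_half x hn, rpow_def_of_pos (by positivity),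
    rpow_def_of_pos (by rw [hZ]; have := exp_pos (-x); nlinarith), ← exp_add, hlogZ, hlogC]
  congr 1
  field_simp
  ring

/-- With `r = 1/n`, the coefficients are continuous in `r` at `0`, so the limit of the rescaled
denominator reduces to those of the rescaled increments `(n/2)(s - 1)`, `s = d, b, t₀`. -/
lemma half_mul_denom_exp {A : ℝ} (hn : n ≠ 0) (hx' : exp x < 2) (hA : 0 < A) :
    (n : ℝ) / 2 * denom n (exp (2 * x / n)) (exp (2 * (x + log A - log (2 * (2 - exp x))) / n))
      = ((1 + (n : ℝ)⁻¹) * A - 2 * (n : ℝ)⁻¹) / (1 + 2 * (n : ℝ)⁻¹)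
        + (2 * (n : ℝ)⁻¹ * (1 + (n : ℝ)⁻¹) * A / (1 + 2 * (n : ℝ)⁻¹) - (1 + 2 * (n : ℝ)⁻¹))
          * ((n : ℝ) / 2 * (exp (2 * (x + log A - log (2 * (2 - exp x))) / n) - 1))
        - 2 / (1 + 2 * (n : ℝ)⁻¹) * ((n : ℝ) / 2 * (exp (2 * x / n) - 1))
        + 2 * ((n : ℝ) / 2 * (t0 n (exp (2 * x / n)) - 1)) := by
  have hn₀ : (0 : ℝ) < n := Nat.cast_pos.mpr (Nat.pos_of_ne_zero hn)
  have ha : 2 - exp x ≠ 0 := by linarith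
  set d := exp (2 * (x + log A - log (2 * (2 - exp x))) / n)
  have hdpow : (2 * exp (2 * x / n) ^ (-(n : ℝ) / 2) - 1) * d ^ (1 + (n : ℝ) / 2) = A / 2 * d := by
    rw [exp_two_mul_div_rpow_neg_half x hn, rpow_add (exp_pos _), rpow_one,
      exp_two_mul_div_rpow_half _ hn, exp_sub, exp_add, exp_log hA,
      exp_log (by linarith), exp_neg]
    field_simp
    ring
  rw [denom, mul_assoc _ (2 * exp (2 * x / n) ^ (-(n : ℝ) / 2) - 1), hdpow]
  field_simp
  ring

lemma tendsto_add_log_sub_log {A : ℕ → ℝ} (hx' : exp x < 2)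
    (hA : Tendsto A atTop (𝓝 (2 * (2 - exp x) * exp y))) :
    Tendsto (fun n => x + log (A n) - log (2 * (2 - exp x))) atTop (𝓝 (x + y)) := by
  have ha : 0 < 2 * (2 - exp x) := by linarith
  have hlog := (continuousAt_log (by positivity)).tendsto.comp hA
  rw [log_mul ha.ne' (exp_ne_zero y), log_exp] at hlog
  have := (hlog.const_add x).sub_const (log (2 * (2 - exp x)))
  rwa [add_sub_assoc, add_sub_cancel_left] at this

lemma tendsto_half_mul_denom_exp {A : ℕ → ℝ} (hx' : exp x < 2)
    (hA : Tendsto A atTop (𝓝 (2 * (2 - exp x) * exp y))) (hA₀ : ∀ n, 0 < A n) :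
    Tendsto (fun n : ℕ => (n : ℝ) / 2 * denom n (exp (2 * x / n))
        (exp (2 * (x + log (A n) - log (2 * (2 - exp x))) / n))) atTop
      (𝓝 (2 * (2 - exp x) * exp y - (x + y) - 2 * log (2 * (2 - exp x)))) := by
  have ha : 0 < 2 * (2 - exp x) := by linarith
  have hr : Tendsto (fun n : ℕ => (n : ℝ)⁻¹) atTop (𝓝 0) := tendsto_inv_atTop_nhds_zero_nat
  have hK : Tendsto (fun n : ℕ => ((1 + (n : ℝ)⁻¹) * A n - 2 * (n : ℝ)⁻¹) / (1 + 2 * (n : ℝ)⁻¹))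
      atTop (𝓝 (2 * (2 - exp x) * exp y)) := by
    have := (((hr.const_add 1).mul hA).sub (hr.const_mul 2)).div
      ((hr.const_mul 2).const_add 1) (by norm_num)
    rwa [mul_zero, add_zero, one_mul, sub_zero, div_one] at this
  have hc₁ : Tendsto (fun n : ℕ => 2 * (n : ℝ)⁻¹ * (1 + (n : ℝ)⁻¹) * A n / (1 + 2 * (n : ℝ)⁻¹)
      - (1 + 2 * (n : ℝ)⁻¹)) atTop (𝓝 (-1)) := by
    have := ((((hr.const_mul 2).mul (hr.const_add 1)).mul hA).div
      ((hr.const_mul 2).const_add 1) (by norm_num)).sub ((hr.const_mul 2).const_add 1)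
    rwa [mul_zero, zero_mul, zero_mul, add_zero, zero_div, zero_sub] at this
  have hc₂ : Tendsto (fun n : ℕ => 2 / (1 + 2 * (n : ℝ)⁻¹)) atTop (𝓝 2) := by
    have := (tendsto_const_nhds (x := (2 : ℝ))).div ((hr.const_mul 2).const_add 1) (by norm_num)
    rwa [mul_zero, add_zero, div_one] at this
  have hd := tendsto_half_mul_exp_sub_one (tendsto_add_log_sub_log hx' hA)
  have ht : Tendsto (fun n : ℕ => (n : ℝ) / 2 * (t0 n (exp (2 * x / n)) - 1)) atTop
      (𝓝 (x - log (2 * (2 - exp x)))) := by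
    have hq : Tendsto (fun n : ℕ => (2 + (n : ℝ)) / (1 + n)) atTop (𝓝 1) := by
      refine (by simpa using (tendsto_one_div_add_atTop_nhds_zero_nat (𝕜 := ℝ)).const_add 1 :
        Tendsto (fun n : ℕ => 1 + 1 / ((n : ℝ) + 1)) atTop (𝓝 1)).congr fun n => ?_
      field_simp
      ring
    have hθ := (((continuousAt_log one_ne_zero).tendsto.comp hq).add_const x).sub_const
      (log (2 * (2 - exp x)))
    rw [log_one, zero_add] at hθ
    refine (tendsto_half_mul_exp_sub_one hθ).congr' ?_
    filter_upwards [eventually_ne_atTop 0] with n hn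
    rw [t0_exp hn hx', Function.comp_apply]
  have hlim := ((hK.add (hc₁.mul hd)).sub (hc₂.mul (tendsto_half_mul_exp_sub_one
    (tendsto_const_nhds (x := x))))).add (ht.const_mul 2)
  rw [show 2 * (2 - exp x) * exp y + -1 * (x + y) - 2 * x + 2 * (x - log (2 * (2 - exp x)))
    = 2 * (2 - exp x) * exp y - (x + y) - 2 * log (2 * (2 - exp x)) by ring] at hlim
  refine hlim.congr' ?_
  filter_upwards [eventually_ne_atTop 0] with n hn
  rw [half_mul_denom_exp hn hx' (hA₀ n)]

/-- A perturbation of `A₀ ∈ [1, 3]` into the open interval `((n + 2)/(n + 1), (3n + 2)/(n + 1))`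
required by the strict inequalities defining `S_n`. -/
noncomputable def perturb (A₀ : ℝ) (n : ℕ) : ℝ := A₀ + (2 - A₀) * (2 / ((n : ℝ) + 1))

lemma one_add_mul_perturb (A₀ : ℝ) (n : ℕ) : (1 + (n : ℝ)) * perturb A₀ n = (n - 1) * A₀ + 4 := by
  rw [perturb]
  field_simp
  ring

lemma perturb_pos {A₀ : ℝ} (h₀ : 0 ≤ A₀) (h₃ : A₀ ≤ 3) (n : ℕ) : 0 < perturb A₀ n := by
  have h := one_add_mul_perturb A₀ n
  have hn : (0 : ℝ) ≤ n := n.cast_nonneg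
  exact pos_of_mul_pos_right (by nlinarith) (by positivity : (0 : ℝ) ≤ 1 + n)

lemma tendsto_perturb (A₀ : ℝ) : Tendsto (perturb A₀) atTop (𝓝 A₀) := by
  have := ((tendsto_one_div_add_atTop_nhds_zero_nat (𝕜 := ℝ)).const_mul 2).const_mul (2 - A₀)
    |>.const_add A₀
  simp only [mul_zero, add_zero, mul_one_div] at this
  exact this

lemma sub_sub_two_mul_log_pos {a : ℝ} (ha : 0 < a) (ha₁ : a ≤ 1) (hx : x < 1) (y : ℝ) :
    0 < a * exp y - (x + y) - 2 * log a := by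
  have h₁ : log a + y + 1 ≤ a * exp y := by
    simpa [exp_add, exp_log ha] using add_one_le_exp (log a + y)
  linarith [log_nonpos ha.le ha₁]

lemma exists_seq_tendsto_ratio (hx : x ∈ Ico (log (3 / 2)) (log 2))
    (hy₁ : exp (-y) ≤ 2 * (2 - exp x)) (hy₂ : 2 * (2 - exp x) ≤ 3 * exp (-y)) :
    ∃ b d : ℕ → ℝ, (∀ᶠ n in atTop, (b n, d n) ∈ Sset n) ∧
      Tendsto (fun n => ratio n (b n) (d n)) atTop (𝓝 ((x + y) / (2 * exp x - x - 4 - y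
        + 2 * (2 - exp x) * (exp y + 1) - 2 * log (2 * (2 - exp x))))) := by
  have hx₁ : 3 / 2 ≤ exp x := by simpa [exp_log] using exp_le_exp.mpr hx.1
  have hx₂ : exp x < 2 := by simpa [exp_log] using exp_lt_exp.mpr hx.2
  set a := 2 * (2 - exp x)
  have hA₁ : 1 ≤ a * exp y := by
    simpa [← exp_add] using mul_le_mul_of_nonneg_right hy₁ (exp_pos y).le
  have hA₃ : a * exp y ≤ 3 := by
    simpa [mul_assoc, ← exp_add] using mul_le_mul_of_nonneg_right hy₂ (exp_pos y).le
  set A := perturb (a * exp y)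
  have hmem : ∀ n : ℕ, n ≠ 0 → (exp (2 * x / n), exp (2 * (x + log (A n) - log a) / n)) ∈ Sset n :=
    fun n hn => by
      have h := one_add_mul_perturb (a * exp y) n
      have h₁ : (1 : ℝ) ≤ n := Nat.one_le_cast.mpr (Nat.pos_of_ne_zero hn)
      exact mem_Sset_exp hn hx₁ hx₂ (by nlinarith) (by nlinarith)
  refine ⟨_, _, (eventually_ne_atTop 0).mono hmem, ?_⟩
  have hpos := sub_sub_two_mul_log_pos (a := a) (by simp only [a]; linarith)
    (by simp only [a]; linarith) (hx.2.trans (by linarith [log_two_lt_d9])) y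
  have hlim := (tendsto_half_mul_exp_sub_one (tendsto_add_log_sub_log (y := y) hx₂
    (tendsto_perturb _))).div
    (tendsto_half_mul_denom_exp hx₂ (tendsto_perturb _)
      (perturb_pos (by linarith) hA₃)) hpos.ne'
  rw [show (x + y) / (a * exp y - (x + y) - 2 * log a) = (x + y) / (2 * exp x - x - 4 - y
    + a * (exp y + 1) - 2 * log a) by simp only [a]; ring_nf] at hlim
  refine hlim.congr' ?_
  filter_upwards [eventually_ne_atTop 0] with n hn
  have hn₀ : (0 : ℝ) < n := Nat.cast_pos.mpr (Nat.pos_of_ne_zero hn)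
  rw [ratio_eq_Wf (Admissible.of_mem (Nat.pos_of_ne_zero hn) (hmem n hn)), Wf, Pi.div_apply,
    mul_div_mul_left _ _ (by positivity : (n : ℝ) / 2 ≠ 0)]

end Limit

/-- `liminf_{m→∞} R_m` is at least the supremum of
`(x+y)/(2e^x - x - 4 - y + 2(2-e^x)(e^y+1) - 2 ln(2(2-e^x)))` over
`x ∈ [ln(3/2), ln 2)` and `y` with `e^{-y} ≤ 2(2-e^x) ≤ 3e^{-y}`. -/
theorem stmt_11 :
    sSup {v : ℝ | ∃ x y : ℝ, x ∈ Set.Ico (Real.log (3 / 2)) (Real.log 2) ∧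
        Real.exp (-y) ≤ 2 * (2 - Real.exp x) ∧ 2 * (2 - Real.exp x) ≤ 3 * Real.exp (-y) ∧
        v = (x + y) / (2 * Real.exp x - x - 4 - y
          + 2 * (2 - Real.exp x) * (Real.exp y + 1)
          - 2 * Real.log (2 * (2 - Real.exp x)))} ≤
      Filter.atTop.liminf fun m : ℕ => Rsp m := by
  refine Real.sSup_le ?_ (le_liminf_of_le isCoboundedUnder_ge_Rsp (.of_forall Rsp_nonneg))
  rintro v ⟨x, y, hx, hy₁, hy₂, rfl⟩
  obtain ⟨b, d, hmem, hlim⟩ := exists_seq_tendsto_ratio hx hy₁ hy₂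
  rw [← hlim.liminf_eq]
  refine liminf_le_liminf ?_ ⟨0, eventually_map.mpr (.of_forall fun n => ratio_nonneg n _ _)⟩
    isCoboundedUnder_ge_Rsp
  filter_upwards [hmem, eventually_ge_atTop 10] with n hS hn
  exact ratio_le_Rsp hn hS
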